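/- arXiv:2203.05245 — 4 statements merged into one kernel-verified Lean document; each statement's English description precedes it below -/
import Mathlib

section
/- Let δ > 0, let P ∈ ℝ^{n×n} be symmetric with P ≻ 0, and set Y := P⁻¹, X := KY, Z := Y − XᵀX. Then the pair of conditions [1 − δ²BᵀPB > 0 and KᵀK + (A + BK)ᵀ(P⁻¹ − δ²BBᵀ)⁻¹(A + BK) ≺ P] holds if and only if Z ≻ 0 and [I, A] M(Y, X, δ) [I, A]ᵀ ≻ 0. -/
open Matrix

set_option linter.unusedSectionVars false
set_option linter.unnecessarySeqFocus false

section AuxLemmas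
variable {m l : Type*} [Fintype m] [DecidableEq m] [Fintype l] [DecidableEq l]

lemma myPosDef_fromBlocks₁₁ {A : Matrix m m ℝ} (B : Matrix m l ℝ) (D : Matrix l l ℝ)
    (hA : A.PosDef) :
    (fromBlocks A B Bᵀ D).PosDef ↔ (D - Bᵀ * A⁻¹ * B).PosDef := by
  haveI := hA.isUnit.invertible
  have hBt : (Bᵀ : Matrix l m ℝ) = Bᴴ := (conjTranspose_eq_transpose_of_trivial B).symm
  rw [hBt]
  constructor
  · intro h
    refine posDef_iff_dotProduct_mulVec.mpr ⟨(IsHermitian.fromBlocks₁₁ _ _ hA.1).mp h.1, fun x hx => ?_⟩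
    have hv : (-((A⁻¹ * B) *ᵥ x) ⊕ᵥ x) ≠ 0 := by
      intro hc
      exact hx (funext fun i => congrFun hc (Sum.inr i))
    have := h.dotProduct_mulVec_pos hv
    rw [dotProduct_mulVec, schur_complement_eq₁₁ B D _ _ hA.1, neg_add_cancel, dotProduct_zero,
      zero_add] at this
    rw [dotProduct_mulVec]; exact this
  · intro h
    refine posDef_iff_dotProduct_mulVec.mpr ⟨(IsHermitian.fromBlocks₁₁ _ _ hA.1).mpr h.1, fun x hx => ?_⟩
    rw [dotProduct_mulVec, ← Sum.elim_comp_inl_inr x, schur_complement_eq₁₁ B D _ _ hA.1]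
    by_cases hy : x ∘ Sum.inr = 0
    · have hx1 : x ∘ Sum.inl ≠ 0 := by
        intro hc
        apply hx
        ext (i | i)
        · exact congrFun hc i
        · exact congrFun hy i
      rw [hy]
      simp only [mulVec_zero, add_zero, star_zero, zero_vecMul, zero_dotProduct]
      have := hA.dotProduct_mulVec_pos hx1
      rwa [dotProduct_mulVec] at this
    · apply add_pos_of_nonneg_of_pos
      · have := hA.posSemidef.dotProduct_mulVec_nonneg (x ∘ Sum.inl + (A⁻¹ * B) *ᵥ (x ∘ Sum.inr))
        rwa [dotProduct_mulVec] at this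
      · have := h.dotProduct_mulVec_pos hy
        rwa [dotProduct_mulVec] at this

lemma myPosDef_fromBlocks₂₂ (A : Matrix m m ℝ) (B : Matrix m l ℝ) {D : Matrix l l ℝ}
    (hD : D.PosDef) :
    (fromBlocks A B Bᵀ D).PosDef ↔ (A - B * D⁻¹ * Bᵀ).PosDef := by
  haveI := hD.isUnit.invertible
  have hBt : (Bᵀ : Matrix l m ℝ) = Bᴴ := (conjTranspose_eq_transpose_of_trivial B).symm
  rw [hBt]
  constructor
  · intro h
    refine posDef_iff_dotProduct_mulVec.mpr ⟨(IsHermitian.fromBlocks₂₂ _ _ hD.1).mp h.1, fun x hx => ?_⟩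
    have hv : (x ⊕ᵥ -((D⁻¹ * Bᴴ) *ᵥ x)) ≠ 0 := by
      intro hc
      exact hx (funext fun i => congrFun hc (Sum.inl i))
    have := h.dotProduct_mulVec_pos hv
    rw [dotProduct_mulVec, schur_complement_eq₂₂ A B _ _ hD.1, add_neg_cancel, star_zero,
      zero_vecMul, zero_dotProduct, zero_add] at this
    rw [dotProduct_mulVec]; exact this
  · intro h
    refine posDef_iff_dotProduct_mulVec.mpr ⟨(IsHermitian.fromBlocks₂₂ _ _ hD.1).mpr h.1, fun x hx => ?_⟩
    rw [dotProduct_mulVec, ← Sum.elim_comp_inl_inr x, schur_complement_eq₂₂ A B _ _ hD.1]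
    by_cases hy : x ∘ Sum.inl = 0
    · have hx1 : x ∘ Sum.inr ≠ 0 := by
        intro hc
        apply hx
        ext (i | i)
        · exact congrFun hy i
        · exact congrFun hc i
      rw [hy]
      simp only [mulVec_zero, zero_add, star_zero, zero_vecMul, zero_dotProduct, add_zero]
      have := hD.dotProduct_mulVec_pos hx1
      rwa [dotProduct_mulVec] at this
    · apply add_pos_of_nonneg_of_pos
      · have := hD.posSemidef.dotProduct_mulVec_nonneg ((D⁻¹ * Bᴴ) *ᵥ (x ∘ Sum.inl) + x ∘ Sum.inr)
        rwa [dotProduct_mulVec] at this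
      · have := h.dotProduct_mulVec_pos hy
        rwa [dotProduct_mulVec] at this

end AuxLemmas

lemma myPosDef_conj {m : Type*} [Fintype m] [DecidableEq m]
    {M : Matrix m m ℝ} (hM : M.PosDef) {C : Matrix m m ℝ} (hC : IsUnit C.det) :
    (Cᵀ * M * C).PosDef := by
  rw [posDef_iff_dotProduct_mulVec]
  constructor
  · have := isHermitian_conjTranspose_mul_mul C hM.1
    rwa [conjTranspose_eq_transpose_of_trivial] at this
  · intro x hx
    have hCx : C *ᵥ x ≠ 0 := by
      intro hc
      apply hx
      have := congrArg (fun v => C⁻¹ *ᵥ v) hc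
      simpa [mulVec_mulVec, nonsing_inv_mul C hC] using this
    have := hM.dotProduct_mulVec_pos hCx
    rw [star_trivial] at this
    rw [Matrix.mul_assoc, ← mulVec_mulVec, dotProduct_mulVec, star_trivial,
      vecMul_transpose, ← mulVec_mulVec]
    exact this

lemma myPosDef_fin_one (M : Matrix (Fin 1) (Fin 1) ℝ) :
    M.PosDef ↔ 0 < M 0 0 := by
  constructor
  · intro h
    have := h.dotProduct_mulVec_pos (x := fun _ => 1) (by simp [funext_iff])
    simpa [dotProduct, mulVec, Fin.sum_univ_one] using this
  · intro h
    rw [posDef_iff_dotProduct_mulVec]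
    constructor
    · ext i j
      fin_cases i <;> fin_cases j <;> simp
    · intro x hx
      have hx0 : x 0 ≠ 0 := by
        intro hc
        apply hx
        ext i
        fin_cases i
        exact hc
      have : star x ⬝ᵥ M *ᵥ x = M 0 0 * (x 0 * x 0) := by
        simp [dotProduct, mulVec, Fin.sum_univ_one]
        ring
      rw [this]
      exact mul_pos h (mul_self_pos.mpr hx0)


/-- The matrix `M(Y, X, δ)` from the change of variables, with `Z = Y - XᵀX`. -/
noncomputable def Mmat {n : ℕ} (B : Matrix (Fin n) (Fin 1) ℝ)
    (Y : Matrix (Fin n) (Fin n) ℝ) (X : Matrix (Fin 1) (Fin n) ℝ) (δ : ℝ) :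
    Matrix (Fin n ⊕ Fin n) (Fin n ⊕ Fin n) ℝ :=
  fromBlocks
    (Y - δ ^ 2 • (B * Bᵀ) - B * X * (Y - Xᵀ * X)⁻¹ * Xᵀ * Bᵀ)
    (-(B * X * (Y - Xᵀ * X)⁻¹ * Y))
    (-(Y * (Y - Xᵀ * X)⁻¹ * Xᵀ * Bᵀ))
    (-(Y * (Y - Xᵀ * X)⁻¹ * Y))

/-- With `Y = P⁻¹`, `X = KY` and `Z = Y - XᵀX`, the bounded-real-lemma conditions
`1 - δ²BᵀPB > 0` and `KᵀK + (A+BK)ᵀ(P⁻¹ - δ²BBᵀ)⁻¹(A+BK) ≺ P` are equivalent to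
`Z ≻ 0` together with the quadratic matrix inequality `[I, A] M(Y,X,δ) [I, A]ᵀ ≻ 0`. -/
theorem change_of_variables (n : ℕ) (hn : 0 < n)
    (A : Matrix (Fin n) (Fin n) ℝ) (B : Matrix (Fin n) (Fin 1) ℝ)
    (K : Matrix (Fin 1) (Fin n) ℝ) (δ : ℝ) (hδ : 0 < δ)
    (P : Matrix (Fin n) (Fin n) ℝ) (hPsymm : P.IsSymm) (hP : P.PosDef)
    (Y : Matrix (Fin n) (Fin n) ℝ) (X : Matrix (Fin 1) (Fin n) ℝ)
    (Z : Matrix (Fin n) (Fin n) ℝ)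
    (hY : Y = P⁻¹) (hX : X = K * Y) (hZ : Z = Y - Xᵀ * X) :
    (0 < 1 - δ ^ 2 * (Bᵀ * P * B) 0 0 ∧
        (P - (Kᵀ * K +
          (A + B * K)ᵀ * (P⁻¹ - δ ^ 2 • (B * Bᵀ))⁻¹ * (A + B * K))).PosDef)
      ↔ (Z.PosDef ∧
          (Matrix.fromCols (1 : Matrix (Fin n) (Fin n) ℝ) A * Mmat B Y X δ * (Matrix.fromCols (1 : Matrix (Fin n) (Fin n) ℝ) A)ᵀ).PosDef) := by
  have hPd : IsUnit P.det := isUnit_iff_ne_zero.mpr hP.det_pos.ne'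
  have hPt : Pᵀ = P := hPsymm
  have hYt : Yᵀ = Y := by rw [hY, transpose_nonsing_inv, hPt]
  have hYpd : Y.PosDef := hY ▸ hP.inv
  have hYd : IsUnit Y.det := isUnit_iff_ne_zero.mpr hYpd.det_pos.ne'
  have hPY : P * Y = 1 := by rw [hY]; exact mul_nonsing_inv P hPd
  have hYP : Y * P = 1 := by rw [hY]; exact nonsing_inv_mul P hPd
  have hYinv : Y⁻¹ = P := by rw [hY, nonsing_inv_nonsing_inv P hPd]
  have hPYM : ∀ {p : Type} (M : Matrix (Fin n) p ℝ), P * (Y * M) = M := fun M => by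
    rw [← Matrix.mul_assoc, hPY, Matrix.one_mul]
  have hYPM : ∀ {p : Type} (M : Matrix (Fin n) p ℝ), Y * (P * M) = M := fun M => by
    rw [← Matrix.mul_assoc, hYP, Matrix.one_mul]
  set N := A + B * K with hN
  set W := P - Kᵀ * K with hWdef
  set G := Y - δ ^ 2 • (B * Bᵀ) with hGdef
  have hZW : Z = Y * W * Y := by
    rw [hZ, hX, transpose_mul, hYt, hWdef]
    simp only [Matrix.mul_sub, Matrix.sub_mul, Matrix.mul_assoc, hPY, Matrix.mul_one]
  -- Claim A : first scalar condition ↔ G.PosDef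
  have hGsub : Y - δ • B * (1 : Matrix (Fin 1) (Fin 1) ℝ)⁻¹ * (δ • B)ᵀ = G := by
    rw [inv_one, Matrix.mul_one, transpose_smul, Matrix.mul_smul, Matrix.smul_mul, smul_smul,
      ← sq, hGdef]
  have hFsub : (1 : Matrix (Fin 1) (Fin 1) ℝ) - (δ • B)ᵀ * Y⁻¹ * (δ • B) =
      1 - δ ^ 2 • (Bᵀ * P * B) := by
    rw [hYinv, transpose_smul, Matrix.smul_mul, Matrix.smul_mul, Matrix.mul_smul, smul_smul,
      ← sq]
  have claimA : (0 < 1 - δ ^ 2 * (Bᵀ * P * B) 0 0) ↔ G.PosDef := by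
    have h1 := myPosDef_fromBlocks₁₁ (δ • B) (1 : Matrix (Fin 1) (Fin 1) ℝ) hYpd
    have h2 := myPosDef_fromBlocks₂₂ Y (δ • B) (Matrix.PosDef.one (n := Fin 1) (R := ℝ))
    rw [hFsub] at h1
    rw [hGsub] at h2
    rw [← h2, h1, myPosDef_fin_one]
    simp [Matrix.sub_apply, one_apply_eq]
  -- main computation of the QMI, valid whenever W is invertible
  have key : IsUnit W.det →
      Matrix.fromCols (1 : Matrix (Fin n) (Fin n) ℝ) A * Mmat B Y X δ * (Matrix.fromCols (1 : Matrix (Fin n) (Fin n) ℝ) A)ᵀ = G - N * W⁻¹ * Nᵀ := by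
    intro hWd
    have hZinv : (Y - Xᵀ * X)⁻¹ = P * W⁻¹ * P := by
      rw [← hZ, hZW, Matrix.mul_inv_rev, Matrix.mul_inv_rev, hYinv, Matrix.mul_assoc]
    unfold Mmat
    rw [fromCols_mul_fromBlocks, transpose_fromCols, transpose_one,
      fromCols_mul_fromRows, hZinv, hX]
    rw [hN, hGdef]
    simp only [transpose_mul, transpose_add, hYt, Matrix.mul_assoc, hPYM, hYPM, hPY,
      Matrix.mul_one, Matrix.one_mul, Matrix.mul_sub, Matrix.sub_mul, Matrix.mul_add,
      Matrix.add_mul, Matrix.mul_neg, Matrix.neg_mul, Matrix.mul_assoc]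
    abel
  -- Claim C : Schur duality between the two conditions, given both corners posdef
  have claimC : G.PosDef → W.PosDef →
      ((W - Nᵀ * G⁻¹ * N).PosDef ↔ (G - N * W⁻¹ * Nᵀ).PosDef) := by
    intro hGpd hWpd
    exact (myPosDef_fromBlocks₁₁ N W hGpd).symm.trans (myPosDef_fromBlocks₂₂ G N hWpd)
  have hcond2 : P - (Kᵀ * K + Nᵀ * (P⁻¹ - δ ^ 2 • (B * Bᵀ))⁻¹ * N) = W - Nᵀ * G⁻¹ * N := by
    rw [← hY, ← hGdef, sub_add_eq_sub_sub, hWdef]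
  rw [hcond2]
  constructor
  · rintro ⟨h1, h2⟩
    have hGpd : G.PosDef := claimA.mp h1
    have hWpd : W.PosDef := by
      have hps : (Nᵀ * G⁻¹ * N).PosSemidef := by
        have := hGpd.inv.posSemidef.conjTranspose_mul_mul_same N
        rwa [conjTranspose_eq_transpose_of_trivial] at this
      have := h2.add_posSemidef hps
      rwa [sub_add_cancel] at this
    have hWd : IsUnit W.det := isUnit_iff_ne_zero.mpr hWpd.det_pos.ne'
    refine ⟨?_, ?_⟩
    · have := myPosDef_conj hWpd hYd
      rwa [hYt, ← hZW] at this
    · rw [key hWd]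
      exact (claimC hGpd hWpd).mp h2
  · rintro ⟨hZpd, hQ⟩
    have hWpd : W.PosDef := by
      have hPZP : Pᵀ * Z * P = W := by
        rw [hPt, hZW]
        simp only [Matrix.mul_assoc, hPYM, hYP, Matrix.mul_one]
      rw [← hPZP]
      exact myPosDef_conj hZpd hPd
    have hWd : IsUnit W.det := isUnit_iff_ne_zero.mpr hWpd.det_pos.ne'
    rw [key hWd] at hQ
    have hGpd : G.PosDef := by
      have hps : (N * W⁻¹ * Nᵀ).PosSemidef := by
        have := hWpd.inv.posSemidef.mul_mul_conjTranspose_same N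
        rwa [conjTranspose_eq_transpose_of_trivial] at this
      have := hQ.add_posSemidef hps
      rwa [sub_add_cancel] at this
    exact ⟨claimA.mpr hGpd, (claimC hGpd hWpd).mpr hQ⟩
end

section
/- Fix δ > 0 and suppose a symmetric Y ≻ 0, X ∈ ℝ^{1×n}, and scalars α ≥ 0, β > 0 satisfy the data-driven LMI. Set K := XY⁻¹ and P := Y⁻¹. Then for every A ∈ Σ: 1 − δ²BᵀPB > 0, KᵀK + (A + BK)ᵀ(P⁻¹ − δ²BBᵀ)⁻¹(A + BK) ≺ P, and A + BK is Schur stable (every complex eigenvalue of A + BK has modulus < 1). -/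
open Matrix

/-- `M` is Schur stable: every complex eigenvalue has modulus `< 1`. -/
def SchurStable {n : ℕ} (M : Matrix (Fin n) (Fin n) ℝ) : Prop :=
  ∀ μ ∈ spectrum ℂ (M.map Complex.ofReal), ‖μ‖ < 1

/-- The data-based matrix `N = [[I, X_U],[0, -X₋]] Φ [[I, X_U],[0, -X₋]]ᵀ` with
`X_U = X₊ - BU`. -/
noncomputable def Nmat {n T : ℕ} (B : Matrix (Fin n) (Fin 1) ℝ)
    (Xm Xp : Matrix (Fin n) (Fin T) ℝ) (U : Matrix (Fin 1) (Fin T) ℝ)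
    (Φ : Matrix (Fin n ⊕ Fin T) (Fin n ⊕ Fin T) ℝ) :
    Matrix (Fin n ⊕ Fin n) (Fin n ⊕ Fin n) ℝ :=
  fromBlocks (1 : Matrix (Fin n) (Fin n) ℝ) (Xp - B * U) 0 (-Xm) * Φ * (fromBlocks (1 : Matrix (Fin n) (Fin n) ℝ) (Xp - B * U) 0 (-Xm))ᵀ

/-- The first (four-block) matrix of the data-driven LMI, with block row sizes `n, n, n, 1`. -/
noncomputable def lmiMat {n T : ℕ} (B : Matrix (Fin n) (Fin 1) ℝ)
    (Xm Xp : Matrix (Fin n) (Fin T) ℝ) (U : Matrix (Fin 1) (Fin T) ℝ)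
    (Φ : Matrix (Fin n ⊕ Fin T) (Fin n ⊕ Fin T) ℝ)
    (Y : Matrix (Fin n) (Fin n) ℝ) (X : Matrix (Fin 1) (Fin n) ℝ) (δ α β : ℝ) :
    Matrix ((Fin n ⊕ Fin n) ⊕ (Fin n ⊕ Fin 1)) ((Fin n ⊕ Fin n) ⊕ (Fin n ⊕ Fin 1)) ℝ :=
  fromBlocks
    (fromBlocks (Y - δ ^ 2 • (B * Bᵀ) - β • 1) 0 0 0)
    (fromBlocks (B * X) 0 Y 0)
    (fromBlocks (Xᵀ * Bᵀ) Y 0 0)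
    (fromBlocks Y Xᵀ X 1)
  - α • (fromRows (fromBlocks (1 : Matrix (Fin n) (Fin n) ℝ) (Xp - B * U) 0 (-Xm)) 0 * Φ *
      (fromRows (fromBlocks (1 : Matrix (Fin n) (Fin n) ℝ) (Xp - B * U) 0 (-Xm))
        (0 : Matrix (Fin n ⊕ Fin 1) (Fin n ⊕ Fin T) ℝ))ᵀ)

set_option maxHeartbeats 1000000
set_option linter.unusedSectionVars false
set_option linter.unusedVariables false

open Matrix
set_option linter.unusedSectionVars false
open Matrix

variable {m p q : Type*} [Fintype m] [Fintype p] [DecidableEq m] [DecidableEq p]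

/-- smul of PSD by nonneg real -/
lemma psd_smul {M : Matrix m m ℝ} (hM : M.PosSemidef) {c : ℝ} (hc : 0 ≤ c) :
    (c • M).PosSemidef := by
  refine PosSemidef.of_dotProduct_mulVec_nonneg ?_ fun x => ?_
  · unfold Matrix.IsHermitian
    rw [conjTranspose_smul, hM.1.eq]
    simp
  · rw [smul_mulVec, dotProduct_smul]
    exact mul_nonneg hc (hM.dotProduct_mulVec_nonneg x)

lemma pd_smul {M : Matrix m m ℝ} (hM : M.PosDef) {c : ℝ} (hc : 0 < c) :
    (c • M).PosDef := by
  refine PosDef.of_dotProduct_mulVec_pos ?_ fun x hx => ?_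
  · unfold Matrix.IsHermitian
    rw [conjTranspose_smul, hM.1.eq]
    simp
  · rw [smul_mulVec, dotProduct_smul]
    exact mul_pos hc (hM.dotProduct_mulVec_pos hx)

/-- conjugation of PosDef by an invertible matrix -/
lemma pd_conj {M N : Matrix m m ℝ} (hM : M.PosDef) (hN : IsUnit N.det) :
    (N * M * Nᵀ).PosDef := by
  refine PosDef.of_dotProduct_mulVec_pos ?_ fun x hx => ?_
  · have hMt : Mᵀ = M := by rw [← conjTranspose_eq_transpose_of_trivial]; exact hM.1.eq
    unfold Matrix.IsHermitian
    rw [conjTranspose_eq_transpose_of_trivial, transpose_mul, transpose_mul,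
      transpose_transpose, hMt, Matrix.mul_assoc]
  · have hy : Nᵀ *ᵥ x ≠ 0 := by
      intro h
      apply hx
      have : (Nᵀ)⁻¹ *ᵥ (Nᵀ *ᵥ x) = x := by
        rw [mulVec_mulVec, nonsing_inv_mul _ (by rwa [det_transpose]), one_mulVec]
      rw [h, mulVec_zero] at this
      exact this.symm
    have : star x ⬝ᵥ (N * M * Nᵀ) *ᵥ x = star (Nᵀ *ᵥ x) ⬝ᵥ M *ᵥ (Nᵀ *ᵥ x) := by
      rw [star_trivial, star_trivial, ← mulVec_mulVec, ← mulVec_mulVec,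
        dotProduct_mulVec x N]
      rw [show N = Nᵀᵀ from (transpose_transpose N).symm, vecMul_transpose,
        transpose_transpose]
    rw [this]
    exact hM.dotProduct_mulVec_pos hy

/-- padding a PSD matrix into a block diagonal -/
lemma psd_pad {M : Matrix m m ℝ} (hM : M.PosSemidef) :
    (fromBlocks M 0 0 (0 : Matrix p p ℝ)).PosSemidef := by
  have h := hM.mul_mul_conjTranspose_same (fromRows (1 : Matrix m m ℝ) (0 : Matrix p m ℝ))
  have he : fromRows (1 : Matrix m m ℝ) (0 : Matrix p m ℝ) * M *
      (fromRows (1 : Matrix m m ℝ) (0 : Matrix p m ℝ))ᴴ = fromBlocks M 0 0 0 := by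
    rw [conjTranspose_eq_transpose_of_trivial, transpose_fromRows, fromRows_mul,
      fromRows_mul_fromCols]
    simp
  rwa [he] at h

variable {m p : Type*} [Fintype m] [Fintype p] [DecidableEq m] [DecidableEq p]

/-- strict Schur complement from a β-padded PSD block matrix -/
lemma schur_posDef {A : Matrix m m ℝ} {Bm : Matrix m p ℝ} {D : Matrix p p ℝ} {β : ℝ}
    (hβ : 0 < β) (hA : A.PosDef) (hD : D.PosDef)
    (h : (fromBlocks (A - β • 1) Bm Bmᵀ D).PosSemidef) :
    (D - Bmᵀ * A⁻¹ * Bm).PosDef := by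
  haveI := hA.isUnit.invertible
  have hAt : Aᵀ = A := by rw [← conjTranspose_eq_transpose_of_trivial]; exact hA.1.eq
  have hBH : Bmᴴ = Bmᵀ := conjTranspose_eq_transpose_of_trivial Bm
  have hherm : (D - Bmᵀ * A⁻¹ * Bm).IsHermitian := by
    have h1 := Matrix.isHermitian_conjTranspose_mul_mul Bm hA.1.inv
    rw [hBH] at h1
    exact hD.1.sub h1
  refine PosDef.of_dotProduct_mulVec_pos hherm fun y hy => ?_
  set x : m → ℝ := -((A⁻¹ * Bm) *ᵥ y) with hxdef
  have key := schur_complement_eq₁₁ (A := A) Bm D x y hA.1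
  rw [hxdef] at key
  simp only [neg_add_cancel, star_trivial] at key
  have hz : (0 : m → ℝ) ᵥ* A ⬝ᵥ (0 : m → ℝ) = 0 := by simp
  rw [hz] at key
  have hsplit : fromBlocks A Bm Bmᴴ D =
      fromBlocks (A - β • 1) Bm Bmᵀ D + fromBlocks (β • (1 : Matrix m m ℝ)) 0 0 0 := by
    rw [fromBlocks_add, hBH]
    congr 1 <;> simp
  have h2 : (x ⊕ᵥ y) ᵥ* fromBlocks (β • (1 : Matrix m m ℝ)) 0 0 0 ⬝ᵥ (x ⊕ᵥ y)
      = β * (x ⬝ᵥ x) := by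
    rw [vecMul_fromBlocks]
    simp only [sumElim_dotProduct_sumElim, vecMul_zero, zero_vecMul, add_zero, zero_add,
      dotProduct_zero, zero_dotProduct]
    rw [← smul_eq_mul, ← smul_dotProduct]
    congr 1
    ext i
    simp [vecMul, dotProduct, Matrix.smul_apply, Matrix.one_apply, Finset.mul_sum, mul_comm]
  have h1 : 0 ≤ (x ⊕ᵥ y) ᵥ* fromBlocks (A - β • 1) Bm Bmᵀ D ⬝ᵥ (x ⊕ᵥ y) := by
    have := h.dotProduct_mulVec_nonneg (x ⊕ᵥ y)
    rwa [star_trivial, dotProduct_mulVec] at this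
  have hform : β * (x ⬝ᵥ x) ≤ y ᵥ* (D - Bmᴴ * A⁻¹ * Bm) ⬝ᵥ y := by
    rw [← zero_add (y ᵥ* _ ⬝ᵥ y), ← key, hsplit, vecMul_add, add_dotProduct, h2]
    linarith
  rw [hBH] at hform
  have hgoal : star y ⬝ᵥ (D - Bmᵀ * A⁻¹ * Bm) *ᵥ y = y ᵥ* (D - Bmᵀ * A⁻¹ * Bm) ⬝ᵥ y := by
    rw [star_trivial, dotProduct_mulVec]
  rw [hgoal]
  by_cases hx0 : x = 0
  · have hABy : (A⁻¹ * Bm) *ᵥ y = 0 := by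
      have : x = -((A⁻¹ * Bm) *ᵥ y) := hxdef
      rw [hx0] at this
      simpa using this.symm
    have hT0 : (Bmᵀ * A⁻¹ * Bm) *ᵥ y = 0 := by
      rw [Matrix.mul_assoc, ← mulVec_mulVec, hABy, mulVec_zero]
    rw [← hgoal, sub_mulVec, hT0, sub_zero, star_trivial]
    have := hD.dotProduct_mulVec_pos hy
    rwa [star_trivial] at this
  · have hxx : 0 < x ⬝ᵥ x := by
      have := (Matrix.PosDef.one (n := m) (R := ℝ)).dotProduct_mulVec_pos hx0
      rwa [star_trivial, one_mulVec] at this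
    calc (0:ℝ) < β * (x ⬝ᵥ x) := mul_pos hβ hxx
    _ ≤ _ := hform

/-- Schur complement of a PosDef block matrix is PosDef -/
lemma schur_posDef' {A : Matrix m m ℝ} {Bm : Matrix m p ℝ} {D : Matrix p p ℝ}
    (hA : A.PosDef) (h : (fromBlocks A Bm Bmᵀ D).PosDef) :
    (D - Bmᵀ * A⁻¹ * Bm).PosDef := by
  haveI := hA.isUnit.invertible
  have hBH : Bmᴴ = Bmᵀ := conjTranspose_eq_transpose_of_trivial Bm
  have hherm : (D - Bmᵀ * A⁻¹ * Bm).IsHermitian := by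
    have h1 := Matrix.isHermitian_conjTranspose_mul_mul Bm hA.1.inv
    rw [hBH] at h1
    have hD : D.IsHermitian := by
      have := h.1
      rw [← hBH, isHermitian_fromBlocks_iff] at this
      exact this.2.2.2
    exact hD.sub h1
  refine PosDef.of_dotProduct_mulVec_pos hherm fun y hy => ?_
  set x : m → ℝ := -((A⁻¹ * Bm) *ᵥ y) with hxdef
  have key := schur_complement_eq₁₁ (A := A) Bm D x y hA.1
  rw [hxdef] at key
  simp only [neg_add_cancel, star_trivial] at key
  have hz : (0 : m → ℝ) ᵥ* A ⬝ᵥ (0 : m → ℝ) = 0 := by simp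
  rw [hz, zero_add] at key
  have hzne : (-((A⁻¹ * Bm) *ᵥ y) ⊕ᵥ y) ≠ 0 := by
    intro hc
    apply hy
    ext i
    have := congrFun hc (Sum.inr i)
    simpa using this
  have hpos := h.dotProduct_mulVec_pos hzne
  rw [star_trivial, dotProduct_mulVec] at hpos
  rw [hBH] at key
  rw [star_trivial, dotProduct_mulVec, ← key]
  exact hpos

/-- converse: assemble a PosDef block matrix from PosDef diagonal + Schur complement -/
lemma posDef_fromBlocks {A : Matrix m m ℝ} {Bm : Matrix m p ℝ} {D : Matrix p p ℝ}
    (hD : D.PosDef) (hS : (A - Bm * D⁻¹ * Bmᵀ).PosDef) :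
    (fromBlocks A Bm Bmᵀ D).PosDef := by
  haveI := hD.isUnit.invertible
  have hBH : Bmᴴ = Bmᵀ := conjTranspose_eq_transpose_of_trivial Bm
  have hAh : A.IsHermitian := by
    have h1 := Matrix.isHermitian_mul_mul_conjTranspose Bm hD.1.inv
    rw [hBH] at h1
    have := hS.1.add h1
    simpa using this
  refine PosDef.of_dotProduct_mulVec_pos ?_ fun z hz => ?_
  · rw [← hBH, isHermitian_fromBlocks_iff]
    exact ⟨hAh, rfl, by rw [conjTranspose_conjTranspose], hD.1⟩
  · obtain ⟨x, y, rfl⟩ : ∃ x y, z = x ⊕ᵥ y := ⟨z ∘ Sum.inl, z ∘ Sum.inr, (Sum.elim_comp_inl_inr z).symm⟩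
    have key := schur_complement_eq₂₂ (D := D) A Bm x y hD.1
    rw [hBH] at key
    simp only [star_trivial] at key
    rw [star_trivial, dotProduct_mulVec, key]
    have hterm2 : 0 ≤ x ᵥ* (A - Bm * D⁻¹ * Bmᵀ) ⬝ᵥ x := by
      have := hS.posSemidef.dotProduct_mulVec_nonneg x
      rwa [star_trivial, dotProduct_mulVec] at this
    by_cases hx0 : x = 0
    · have hy0 : y ≠ 0 := by
        intro hc; exact hz (by rw [hx0, hc]; ext i; cases i <;> simp)
      have hv : (D⁻¹ * Bmᵀ) *ᵥ x + y ≠ 0 := by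
        rw [hx0, mulVec_zero, zero_add]; exact hy0
      have h1 := hD.dotProduct_mulVec_pos hv
      rw [star_trivial, dotProduct_mulVec] at h1
      exact add_pos_of_pos_of_nonneg h1 hterm2
    · have hterm2' : 0 < x ᵥ* (A - Bm * D⁻¹ * Bmᵀ) ⬝ᵥ x := by
        have := hS.dotProduct_mulVec_pos hx0
        rwa [star_trivial, dotProduct_mulVec] at this
      have h1 : 0 ≤ ((D⁻¹ * Bmᵀ) *ᵥ x + y) ᵥ* D ⬝ᵥ ((D⁻¹ * Bmᵀ) *ᵥ x + y) := by
        have := hD.posSemidef.dotProduct_mulVec_nonneg ((D⁻¹ * Bmᵀ) *ᵥ x + y)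
        rwa [star_trivial, dotProduct_mulVec] at this
      exact add_pos_of_nonneg_of_pos h1 hterm2' 

/-- Loewner anti-monotonicity of matrix inverse -/
lemma inv_sub_inv_psd {E Y : Matrix m m ℝ} (hE : E.PosDef) (hY : Y.PosDef)
    (h : (Y - E).PosSemidef) : (E⁻¹ - Y⁻¹).PosSemidef := by
  have hEd : IsUnit E.det := (Matrix.isUnit_iff_isUnit_det E).mp hE.isUnit
  have hYd : IsUnit Y.det := (Matrix.isUnit_iff_isUnit_det Y).mp hY.isUnit
  refine PosSemidef.of_dotProduct_mulVec_nonneg (hE.1.inv.sub hY.1.inv) fun x => ?_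
  set u := E⁻¹ *ᵥ x with hu
  set v := Y⁻¹ *ᵥ x with hv
  have hEu : E *ᵥ u = x := by rw [hu, mulVec_mulVec, mul_nonsing_inv _ hEd, one_mulVec]
  have hYv : Y *ᵥ v = x := by rw [hv, mulVec_mulVec, mul_nonsing_inv _ hYd, one_mulVec]
  have hEt : Eᵀ = E := by rw [← conjTranspose_eq_transpose_of_trivial]; exact hE.1.eq
  have h1 : u ⬝ᵥ (E *ᵥ v) = x ⬝ᵥ v := by
    rw [dotProduct_mulVec]
    congr 1
    rw [← hEt, vecMul_transpose, hEu]
  have expand : star x ⬝ᵥ ((E⁻¹ - Y⁻¹) *ᵥ x) =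
      (u - v) ⬝ᵥ (E *ᵥ (u - v)) + v ⬝ᵥ ((Y - E) *ᵥ v) := by
    rw [star_trivial, sub_mulVec, dotProduct_sub, ← hu, ← hv]
    rw [mulVec_sub, dotProduct_sub, sub_dotProduct, sub_dotProduct, sub_mulVec,
      dotProduct_sub, hEu, hYv, h1]
    rw [dotProduct_comm u x, dotProduct_comm v x]
    ring
  rw [expand]
  have t1 : 0 ≤ (u - v) ⬝ᵥ (E *ᵥ (u - v)) := by
    have := hE.posSemidef.dotProduct_mulVec_nonneg (u - v); rwa [star_trivial] at this
  have t2 : 0 ≤ v ⬝ᵥ ((Y - E) *ᵥ v) := by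
    have := h.dotProduct_mulVec_nonneg v; rwa [star_trivial] at this
  linarith

variable {m : Type*} [Fintype m] [DecidableEq m]

lemma re_quad (M : Matrix m m ℝ) (v : m → ℂ) :
    (star v ⬝ᵥ (M.map (Complex.ofReal)) *ᵥ v).re
      = (fun i => (v i).re) ⬝ᵥ M *ᵥ (fun i => (v i).re)
        + (fun i => (v i).im) ⬝ᵥ M *ᵥ (fun i => (v i).im) := by
  simp only [dotProduct, mulVec, Pi.star_apply, Matrix.map_apply]
  rw [Complex.re_sum, ← Finset.sum_add_distrib]
  refine Finset.sum_congr rfl fun i _ => ?_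
  rw [Finset.mul_sum, Complex.re_sum, Finset.mul_sum, Finset.mul_sum, ← Finset.sum_add_distrib]
  refine Finset.sum_congr rfl fun j _ => ?_
  simp only [Complex.mul_re, Complex.ofReal_re, Complex.ofReal_im, RCLike.star_def,
    Complex.conj_re, Complex.conj_im, Complex.mul_im]
  ring

lemma mulVec_map_star (F : Matrix m m ℝ) (v : m → ℂ) :
    (F.map Complex.ofReal) *ᵥ (star v) = star ((F.map Complex.ofReal) *ᵥ v) := by
  ext i
  simp only [mulVec, dotProduct, Pi.star_apply, Matrix.map_apply, star_sum, star_mul',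
    RCLike.star_def, Complex.conj_ofReal]

lemma quad_conj (F M : Matrix m m ℝ) (v : m → ℂ) :
    star v ⬝ᵥ (((Fᵀ * M * F).map Complex.ofReal) *ᵥ v)
      = star ((F.map Complex.ofReal) *ᵥ v) ⬝ᵥ
        ((M.map Complex.ofReal) *ᵥ ((F.map Complex.ofReal) *ᵥ v)) := by
  have hmap : (Fᵀ * M * F).map (Complex.ofReal)
      = (F.map Complex.ofReal)ᵀ * (M.map Complex.ofReal) * (F.map Complex.ofReal) := by
    rw [show (Complex.ofReal : ℝ → ℂ) = ⇑Complex.ofRealHom from rfl, Matrix.map_mul,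
      Matrix.map_mul, Matrix.transpose_map]
  rw [hmap, ← mulVec_mulVec, ← mulVec_mulVec, dotProduct_mulVec (star v),
    vecMul_transpose, mulVec_map_star]

lemma lyapunov_schur {F Pm Mm : Matrix m m ℝ}
    (hP : Pm.PosDef) (hM : Mm.PosSemidef) (hMP : (Mm - Pm).PosSemidef)
    (hQ : (Pm - Fᵀ * Mm * F).PosDef) :
    ∀ μ ∈ spectrum ℂ (F.map Complex.ofReal), ‖μ‖ < 1 := by
  intro μ hμ
  set Fc := F.map Complex.ofReal with hFc
  have hspec : μ ∈ spectrum ℂ (Matrix.toLinAlgEquiv' Fc) := by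
    rwa [AlgEquiv.spectrum_eq]
  have hev : Module.End.HasEigenvalue
      (Matrix.toLinAlgEquiv' Fc : Module.End ℂ (m → ℂ)) μ :=
    Module.End.hasEigenvalue_iff_mem_spectrum.mpr hspec
  obtain ⟨v, hvm, hv0⟩ := Module.End.HasEigenvalue.exists_hasEigenvector hev
  have hFv : Fc *ᵥ v = μ • v := by
    have := Module.End.mem_eigenspace_iff.mp hvm
    rwa [Matrix.toLinAlgEquiv'_apply] at this
  set a : m → ℝ := fun i => (v i).re with ha
  set b : m → ℝ := fun i => (v i).im with hb
  set q : Matrix m m ℝ → ℝ := fun R => a ⬝ᵥ R *ᵥ a + b ⬝ᵥ R *ᵥ b with hq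
  have qnonneg : ∀ {R : Matrix m m ℝ}, R.PosSemidef → 0 ≤ q R := by
    intro R hR
    have h1 := hR.dotProduct_mulVec_nonneg a; have h2 := hR.dotProduct_mulVec_nonneg b
    rw [star_trivial] at h1 h2
    exact add_nonneg h1 h2
  have qpos : ∀ {R : Matrix m m ℝ}, R.PosDef → 0 < q R := by
    intro R hR
    have hab : a ≠ 0 ∨ b ≠ 0 := by
      by_contra hc
      push_neg at hc
      apply hv0
      ext i
      have h1 := congrFun hc.1 i
      have h2 := congrFun hc.2 i
      simp only [ha, hb, Pi.zero_apply] at h1 h2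
      exact Complex.ext (by simpa using h1) (by simpa using h2)
    rcases hab with h | h
    · have h1 := hR.dotProduct_mulVec_pos h
      rw [star_trivial] at h1
      have h2 := hR.posSemidef.dotProduct_mulVec_nonneg b
      rw [star_trivial] at h2
      exact add_pos_of_pos_of_nonneg h1 h2
    · have h1 := hR.posSemidef.dotProduct_mulVec_nonneg a
      rw [star_trivial] at h1
      have h2 := hR.dotProduct_mulVec_pos h
      rw [star_trivial] at h2
      exact add_pos_of_nonneg_of_pos h1 h2
  have qsub : ∀ R₁ R₂ : Matrix m m ℝ, q (R₁ - R₂) = q R₁ - q R₂ := by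
    intro R₁ R₂
    simp only [hq, sub_mulVec, dotProduct_sub]
    try ring
  have qre : ∀ R : Matrix m m ℝ, q R = (star v ⬝ᵥ (R.map Complex.ofReal) *ᵥ v).re := by
    intro R; rw [re_quad]
  have hkey : q (Fᵀ * Mm * F) = Complex.normSq μ * q Mm := by
    rw [qre, quad_conj, hFv]
    rw [star_smul, smul_dotProduct, mulVec_smul, dotProduct_smul]
    rw [smul_eq_mul, smul_eq_mul, ← mul_assoc]
    have : (starRingEnd ℂ) μ * μ = (Complex.normSq μ : ℂ) := by
      rw [mul_comm, Complex.mul_conj]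
    rw [show star μ = (starRingEnd ℂ) μ from rfl, this, Complex.re_ofReal_mul, qre]
  have h1 : 0 < q Pm - q (Fᵀ * Mm * F) := by rw [← qsub]; exact qpos hQ
  have h2 : 0 ≤ q Mm - q Pm := by rw [← qsub]; exact qnonneg hMP
  have h3 : 0 < q Pm := qpos hP
  by_contra hc
  push_neg at hc
  have habs : 1 ≤ Complex.normSq μ := by
    have := Complex.sq_norm μ
    nlinarith
  nlinarith [hkey]

/-- ₂₂ version of `schur_posDef'` -/
lemma schur_posDef'' {m p : Type*} [Fintype m] [Fintype p] [DecidableEq m] [DecidableEq p]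
    {A : Matrix m m ℝ} {Bm : Matrix m p ℝ} {D : Matrix p p ℝ}
    (hD : D.PosDef) (h : (fromBlocks A Bm Bmᵀ D).PosDef) :
    (A - Bm * D⁻¹ * Bmᵀ).PosDef := by
  haveI := hD.isUnit.invertible
  have hBH : Bmᴴ = Bmᵀ := conjTranspose_eq_transpose_of_trivial Bm
  have hherm : (A - Bm * D⁻¹ * Bmᵀ).IsHermitian := by
    have h1 := Matrix.isHermitian_mul_mul_conjTranspose Bm hD.1.inv
    rw [hBH] at h1
    have hAh : A.IsHermitian := by
      have := h.1
      rw [← hBH, isHermitian_fromBlocks_iff] at this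
      exact this.1
    exact hAh.sub h1
  refine PosDef.of_dotProduct_mulVec_pos hherm fun x hx => ?_
  set y : p → ℝ := -((D⁻¹ * Bmᵀ) *ᵥ x) with hydef
  have key := schur_complement_eq₂₂ (D := D) A Bm x y hD.1
  rw [hBH, hydef] at key
  simp only [add_neg_cancel, star_trivial] at key
  have hz : (0 : p → ℝ) ᵥ* D ⬝ᵥ (0 : p → ℝ) = 0 := by simp
  rw [hz, zero_add] at key
  have hzne : (x ⊕ᵥ y) ≠ 0 := by
    intro hc
    apply hx
    ext i
    simpa using congrFun hc (Sum.inl i)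
  have hpos := h.dotProduct_mulVec_pos hzne
  rw [star_trivial, dotProduct_mulVec] at hpos
  rw [hydef] at hpos
  rw [star_trivial, dotProduct_mulVec, ← key]
  exact hpos


/-- If the data-driven LMI is feasible with `Y ≻ 0` symmetric, `α ≥ 0`, `β > 0`, then
`K = XY⁻¹` and `P = Y⁻¹` certify, for every `A` consistent with the data, the
bounded-real-lemma conditions and Schur stability of `A + BK`. -/
theorem lmi_gives_stabilizing_controller (n T : ℕ) (hn : 0 < n) (hT : 0 < T)
    (B : Matrix (Fin n) (Fin 1) ℝ) (Xm Xp : Matrix (Fin n) (Fin T) ℝ)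
    (U : Matrix (Fin 1) (Fin T) ℝ)
    (Φ₁₁ : Matrix (Fin n) (Fin n) ℝ) (Φ₁₂ : Matrix (Fin n) (Fin T) ℝ)
    (Φ₂₂ : Matrix (Fin T) (Fin T) ℝ)
    (hΦ₁₁ : Φ₁₁.IsSymm) (hΦ₂₂symm : Φ₂₂.IsSymm) (hΦ₂₂ : (-Φ₂₂).PosDef)
    (δ : ℝ) (hδ : 0 < δ)
    (Y : Matrix (Fin n) (Fin n) ℝ) (X : Matrix (Fin 1) (Fin n) ℝ) (α β : ℝ)
    (hY : Y.IsSymm) (hYpos : Y.PosDef) (hα : 0 ≤ α) (hβ : 0 < β)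
    (hLMI₁ : (lmiMat B Xm Xp U (fromBlocks Φ₁₁ Φ₁₂ Φ₁₂ᵀ Φ₂₂) Y X δ α β).PosSemidef)
    (hLMI₂ : (fromBlocks Y Xᵀ X (1 : Matrix (Fin 1) (Fin 1) ℝ)).PosDef)
    (K : Matrix (Fin 1) (Fin n) ℝ) (P : Matrix (Fin n) (Fin n) ℝ)
    (hK : K = X * Y⁻¹) (hP : P = Y⁻¹) :
    ∀ A : Matrix (Fin n) (Fin n) ℝ,
      (fromCols (1 : Matrix (Fin n) (Fin n) ℝ) A * Nmat B Xm Xp U (fromBlocks Φ₁₁ Φ₁₂ Φ₁₂ᵀ Φ₂₂) *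
        (fromCols (1 : Matrix (Fin n) (Fin n) ℝ) A)ᵀ).PosSemidef →
      0 < 1 - δ ^ 2 * (Bᵀ * P * B) 0 0 ∧
      (P - (Kᵀ * K +
        (A + B * K)ᵀ * (P⁻¹ - δ ^ 2 • (B * Bᵀ))⁻¹ * (A + B * K))).PosDef ∧
      SchurStable (A + B * K) := by
  subst hK hP
  intro A hA
  have hYdet : IsUnit Y.det := (Matrix.isUnit_iff_isUnit_det Y).mp hYpos.isUnit
  have hYt : Yᵀ = Y := by rw [← conjTranspose_eq_transpose_of_trivial]; exact hYpos.1.eq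
  have hYinvt : (Y⁻¹)ᵀ = Y⁻¹ := by rw [transpose_nonsing_inv, hYt]
  set Φm := fromBlocks Φ₁₁ Φ₁₂ Φ₁₂ᵀ Φ₂₂ with hΦm
  set Nm := Nmat B Xm Xp U Φm with hNmdef
  set F := A + B * (X * Y⁻¹) with hFdef
  have hFY : F * Y = B * X + A * Y := by
    rw [hFdef, Matrix.add_mul, Matrix.mul_assoc, Matrix.mul_assoc,
      nonsing_inv_mul _ hYdet, Matrix.mul_one, add_comm]
  set L := fromCols (1 : Matrix (Fin n) (Fin n) ℝ) A with hLdef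
  have hLT : Lᵀ = fromRows 1 Aᵀ := by
    rw [hLdef, transpose_fromCols, transpose_one]
  -- Step A : block structure of the LMI matrix
  have hlmi : lmiMat B Xm Xp U Φm Y X δ α β =
      fromBlocks (fromBlocks (Y - δ ^ 2 • (B * Bᵀ) - β • 1) 0 0 0 - α • Nm)
        (fromBlocks (B * X) 0 Y 0) (fromBlocks (Xᵀ * Bᵀ) Y 0 0) (fromBlocks Y Xᵀ X 1) := by
    have hR : fromRows (fromBlocks (1 : Matrix (Fin n) (Fin n) ℝ) (Xp - B * U) 0 (-Xm))
          (0 : Matrix (Fin n ⊕ Fin 1) (Fin n ⊕ Fin T) ℝ) * Φm *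
        (fromRows (fromBlocks (1 : Matrix (Fin n) (Fin n) ℝ) (Xp - B * U) 0 (-Xm))
          (0 : Matrix (Fin n ⊕ Fin 1) (Fin n ⊕ Fin T) ℝ))ᵀ = fromBlocks Nm 0 0 0 := by
      rw [transpose_fromRows, transpose_zero, fromRows_mul, Matrix.zero_mul,
        fromRows_mul_fromCols, Matrix.zero_mul, Matrix.mul_zero, Matrix.zero_mul]
      rfl
    unfold lmiMat
    rw [hR, fromBlocks_smul, smul_zero, smul_zero, smul_zero, sub_eq_add_neg,
      fromBlocks_neg, neg_zero, neg_zero, neg_zero, fromBlocks_add, add_zero,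
      add_zero, add_zero, ← sub_eq_add_neg]
  rw [hlmi] at hLMI₁
  -- Step B : conjugate by [[L,0],[0,1]]
  set Cm := fromBlocks L 0 0 (1 : Matrix (Fin n ⊕ Fin 1) (Fin n ⊕ Fin 1) ℝ) with hCmdef
  have hH0 := hLMI₁.mul_mul_conjTranspose_same Cm
  have hblock : Cm * (fromBlocks (fromBlocks (Y - δ ^ 2 • (B * Bᵀ) - β • 1) 0 0 0 - α • Nm)
        (fromBlocks (B * X) 0 Y 0) (fromBlocks (Xᵀ * Bᵀ) Y 0 0) (fromBlocks Y Xᵀ X 1)) * Cmᴴ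
      = fromBlocks (Y - δ ^ 2 • (B * Bᵀ) - β • 1 - α • (L * Nm * Lᵀ))
        (fromCols (B * X + A * Y) 0) (fromRows (Xᵀ * Bᵀ + Y * Aᵀ) 0)
        (fromBlocks Y Xᵀ X 1) := by
    have hCH : Cmᴴ = fromBlocks Lᵀ 0 0 1 := by
      rw [conjTranspose_eq_transpose_of_trivial, hCmdef, fromBlocks_transpose,
        transpose_zero, transpose_zero, transpose_one]
    rw [hCH, hCmdef]
    simp only [fromBlocks_multiply, Matrix.zero_mul, Matrix.mul_zero, Matrix.one_mul,
      Matrix.mul_one, add_zero, zero_add]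
    have e1 : L * fromBlocks (Y - δ ^ 2 • (B * Bᵀ) - β • 1) 0 0 (0 : Matrix (Fin n) (Fin n) ℝ) * Lᵀ
        = Y - δ ^ 2 • (B * Bᵀ) - β • 1 := by
      rw [hLdef, hLT, fromCols_mul_fromBlocks]
      simp only [Matrix.mul_zero, Matrix.one_mul, add_zero, zero_add]
      rw [fromCols_mul_fromRows, Matrix.mul_one, Matrix.zero_mul, add_zero]
    have e2 : L * fromBlocks (B * X) (0 : Matrix (Fin n) (Fin 1) ℝ) Y 0
        = fromCols (B * X + A * Y) (0 : Matrix (Fin n) (Fin 1) ℝ) := by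
      rw [hLdef, fromCols_mul_fromBlocks]
      simp only [Matrix.one_mul, Matrix.mul_zero, add_zero]
    have e3 : fromBlocks (Xᵀ * Bᵀ) Y (0 : Matrix (Fin 1) (Fin n) ℝ) 0 * Lᵀ
        = fromRows (Xᵀ * Bᵀ + Y * Aᵀ) (0 : Matrix (Fin 1) (Fin n) ℝ) := by
      rw [hLT, fromBlocks_mul_fromRows]
      simp only [Matrix.mul_one, Matrix.zero_mul, Matrix.mul_zero, add_zero, zero_add]
    rw [Matrix.mul_sub, Matrix.sub_mul, Matrix.mul_smul, Matrix.smul_mul, e1, e2, e3]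
  rw [hblock] at hH0
  -- Step C : drop the data term, get the key PSD matrix
  have hH1 : (fromBlocks (Y - δ ^ 2 • (B * Bᵀ) - β • 1)
      (fromCols (B * X + A * Y) 0) (fromRows (Xᵀ * Bᵀ + Y * Aᵀ) 0)
      (fromBlocks Y Xᵀ X 1)).PosSemidef := by
    have hpad := psd_pad (p := Fin n ⊕ Fin 1) (psd_smul hA hα)
    have := hH0.add hpad
    have heq : fromBlocks (Y - δ ^ 2 • (B * Bᵀ) - β • 1 - α • (L * Nm * Lᵀ))
          (fromCols (B * X + A * Y) 0) (fromRows (Xᵀ * Bᵀ + Y * Aᵀ) 0)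
          (fromBlocks Y Xᵀ X 1) + fromBlocks (α • (L * Nm * Lᵀ)) 0 0 0
        = fromBlocks (Y - δ ^ 2 • (B * Bᵀ) - β • 1)
          (fromCols (B * X + A * Y) 0) (fromRows (Xᵀ * Bᵀ + Y * Aᵀ) 0)
          (fromBlocks Y Xᵀ X 1) := by
      rw [fromBlocks_add, sub_add_cancel, add_zero, add_zero, add_zero]
    rwa [heq] at this
  -- W = Y - XᵀX is positive definite
  set W := Y - Xᵀ * X with hWdef
  have hW : W.PosDef := by
    have h' : (fromBlocks Y Xᵀ Xᵀᵀ (1 : Matrix (Fin 1) (Fin 1) ℝ)).PosDef := by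
      rwa [transpose_transpose]
    have := schur_posDef'' (Matrix.PosDef.one) h'
    rwa [inv_one, Matrix.mul_one, transpose_transpose] at this
  have hWdet : IsUnit W.det := (Matrix.isUnit_iff_isUnit_det W).mp hW.isUnit
  have hM22det : IsUnit (fromBlocks Y Xᵀ X (1 : Matrix (Fin 1) (Fin 1) ℝ)).det :=
    (Matrix.isUnit_iff_isUnit_det _).mp hLMI₂.isUnit
  -- Step D : first Schur complement
  set E := Y - δ ^ 2 • (B * Bᵀ) with hEdef
  set Tm := Y * W⁻¹ * Y with hTmdef
  have hS₀ : (E - β • 1 - F * Tm * Fᵀ).PosSemidef := by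
    haveI := hLMI₂.isUnit.invertible
    have hcc : (fromCols (B * X + A * Y) (0 : Matrix (Fin n) (Fin 1) ℝ))ᴴ
        = fromRows (Xᵀ * Bᵀ + Y * Aᵀ) (0 : Matrix (Fin 1) (Fin n) ℝ) := by
      rw [conjTranspose_eq_transpose_of_trivial, transpose_fromCols, transpose_add,
        transpose_mul, transpose_mul, hYt, transpose_zero]
    have hiff := PosDef.fromBlocks₂₂ (E - β • 1)
      (fromCols (B * X + A * Y) (0 : Matrix (Fin n) (Fin 1) ℝ)) hLMI₂
    rw [hcc] at hiff
    have hs := hiff.mp hH1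
    have hFC : fromCols (B * X + A * Y) (0 : Matrix (Fin n) (Fin 1) ℝ)
        = F * fromCols Y 0 := by
      rw [mul_fromCols, Matrix.mul_zero, hFY]
    have hRowsSolve : (fromBlocks Y Xᵀ X (1 : Matrix (Fin 1) (Fin 1) ℝ))⁻¹ *
        fromRows Y (0 : Matrix (Fin 1) (Fin n) ℝ)
        = fromRows (W⁻¹ * Y) (-(X * (W⁻¹ * Y))) := by
      have hmul : fromBlocks Y Xᵀ X (1 : Matrix (Fin 1) (Fin 1) ℝ) *
          fromRows (W⁻¹ * Y) (-(X * (W⁻¹ * Y))) = fromRows Y 0 := by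
        rw [fromBlocks_mul_fromRows, Matrix.mul_neg, ← sub_eq_add_neg,
          ← Matrix.mul_assoc Xᵀ X, ← Matrix.sub_mul, ← hWdef, ← Matrix.mul_assoc,
          mul_nonsing_inv _ hWdet, Matrix.one_mul, Matrix.one_mul, add_neg_cancel]
      rw [← hmul, ← Matrix.mul_assoc, nonsing_inv_mul _ hM22det, Matrix.one_mul]
    have hRowsF : fromRows (Xᵀ * Bᵀ + Y * Aᵀ) (0 : Matrix (Fin 1) (Fin n) ℝ)
        = fromRows Y 0 * Fᵀ := by
      rw [fromRows_mul, Matrix.zero_mul]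
      congr 1
      rw [show Y * Fᵀ = (F * Y)ᵀ by rw [transpose_mul, hYt], hFY, transpose_add,
        transpose_mul, transpose_mul, hYt]
    have hTmEq : fromCols (B * X + A * Y) (0 : Matrix (Fin n) (Fin 1) ℝ) *
        (fromBlocks Y Xᵀ X (1 : Matrix (Fin 1) (Fin 1) ℝ))⁻¹ *
        fromRows (Xᵀ * Bᵀ + Y * Aᵀ) (0 : Matrix (Fin 1) (Fin n) ℝ) = F * Tm * Fᵀ := by
      rw [hFC, hRowsF]
      have hassoc : F * fromCols Y (0 : Matrix (Fin n) (Fin 1) ℝ) *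
          (fromBlocks Y Xᵀ X (1 : Matrix (Fin 1) (Fin 1) ℝ))⁻¹ *
          (fromRows Y (0 : Matrix (Fin 1) (Fin n) ℝ) * Fᵀ)
          = F * (fromCols Y (0 : Matrix (Fin n) (Fin 1) ℝ) * ((fromBlocks Y Xᵀ X (1 : Matrix (Fin 1) (Fin 1) ℝ))⁻¹ * fromRows Y (0 : Matrix (Fin 1) (Fin n) ℝ))) * Fᵀ := by
        simp only [Matrix.mul_assoc]
      rw [hassoc, hRowsSolve, fromCols_mul_fromRows, Matrix.zero_mul, add_zero,
        hTmdef]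
      simp only [Matrix.mul_assoc]
    rwa [hTmEq] at hs
  have hTpd : Tm.PosDef := by
    have := pd_conj (hW.inv) hYdet
    rwa [hYt] at this
  have hFTF : (F * Tm * Fᵀ).PosSemidef := by
    have := hTpd.posSemidef.mul_mul_conjTranspose_same F
    rwa [conjTranspose_eq_transpose_of_trivial] at this
  have hE : E.PosDef := by
    have h1 : (E - β • 1 - F * Tm * Fᵀ + F * Tm * Fᵀ).PosSemidef := hS₀.add hFTF
    rw [sub_add_cancel] at h1
    have h2 := (pd_smul (Matrix.PosDef.one (n := Fin n) (R := ℝ)) hβ).add_posSemidef h1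
    rwa [add_sub_cancel] at h2
  -- Статement 1
  have stmt1 : 0 < 1 - δ ^ 2 * (Bᵀ * Y⁻¹ * B) 0 0 := by
    have hsm : (δ • B) * (1 : Matrix (Fin 1) (Fin 1) ℝ)⁻¹ * (δ • B)ᵀ
        = δ ^ 2 • (B * Bᵀ) := by
      rw [inv_one, Matrix.mul_one, transpose_smul, Matrix.smul_mul, Matrix.mul_smul,
        smul_smul, sq]
    have hJ2 : (fromBlocks Y (δ • B) (δ • B)ᵀ (1 : Matrix (Fin 1) (Fin 1) ℝ)).PosDef := by
      apply posDef_fromBlocks Matrix.PosDef.one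
      rw [hsm]
      exact hE
    have hs1 := schur_posDef' hYpos hJ2
    have hsm2 : (δ • B)ᵀ * Y⁻¹ * (δ • B) = δ ^ 2 • (Bᵀ * Y⁻¹ * B) := by
      rw [transpose_smul, Matrix.smul_mul, Matrix.smul_mul, Matrix.mul_smul,
        smul_smul, sq]
    rw [hsm2] at hs1
    have h00 := hs1.dotProduct_mulVec_pos (x := fun _ => 1) (by
      intro hc
      exact one_ne_zero (congrFun hc 0))
    simpa [dotProduct, mulVec, Fin.sum_univ_one, Matrix.sub_apply, Matrix.one_apply,
      Matrix.smul_apply, smul_eq_mul] using h00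
  -- Step E : second Schur complement, statement 2
  have hS2 : (W - (F * Y)ᵀ * E⁻¹ * (F * Y)).PosDef := by
    haveI := hW.isUnit.invertible
    apply schur_posDef hβ hE hW
    have hiff := PosDef.fromBlocks₂₂ (E - β • 1) (F * Y) hW
    rw [conjTranspose_eq_transpose_of_trivial] at hiff
    apply hiff.mpr
    have heq2 : F * Y * W⁻¹ * (F * Y)ᵀ = F * Tm * Fᵀ := by
      rw [transpose_mul, hYt, hTmdef]
      simp only [Matrix.mul_assoc]
    rwa [heq2]
  have hYinvinv : Y⁻¹⁻¹ = Y := Matrix.nonsing_inv_nonsing_inv _ hYdet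
  have stmt2 : (Y⁻¹ - ((X * Y⁻¹)ᵀ * (X * Y⁻¹) +
      Fᵀ * (Y⁻¹⁻¹ - δ ^ 2 • (B * Bᵀ))⁻¹ * F)).PosDef := by
    rw [hYinvinv, ← hEdef]
    have hconj := pd_conj hS2 ((Matrix.isUnit_iff_isUnit_det _).mp hYpos.inv.isUnit)
    have key2 : Y⁻¹ * (W - (F * Y)ᵀ * E⁻¹ * (F * Y)) * (Y⁻¹)ᵀ
        = Y⁻¹ - ((X * Y⁻¹)ᵀ * (X * Y⁻¹) + Fᵀ * E⁻¹ * F) := by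
      have c2 : Y * Y⁻¹ = 1 := mul_nonsing_inv _ hYdet
      have c3 : ∀ Z : Matrix (Fin n) (Fin n) ℝ, Y⁻¹ * (Y * Z) = Z := fun Z => by
        rw [← Matrix.mul_assoc, nonsing_inv_mul _ hYdet, Matrix.one_mul]
      rw [hYinvt, hWdef, transpose_mul (F) (Y), hYt, transpose_mul X Y⁻¹, hYinvt]
      simp only [Matrix.mul_sub, Matrix.sub_mul, Matrix.mul_assoc, c2, c3,
        Matrix.mul_one, Matrix.one_mul]
      abel
    rwa [key2] at hconj
  -- Statement 3
  have hQ' : (Y⁻¹ - Fᵀ * E⁻¹ * F).PosDef := by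
    have hKK : ((X * Y⁻¹)ᵀ * (X * Y⁻¹)).PosSemidef := by
      have := posSemidef_conjTranspose_mul_self (X * Y⁻¹)
      rwa [conjTranspose_eq_transpose_of_trivial] at this
    have h3 := (by rw [hYinvinv, ← hEdef] at stmt2; exact stmt2 :
      (Y⁻¹ - ((X * Y⁻¹)ᵀ * (X * Y⁻¹) + Fᵀ * E⁻¹ * F)).PosDef)
    have := h3.add_posSemidef hKK
    have heq3 : Y⁻¹ - ((X * Y⁻¹)ᵀ * (X * Y⁻¹) + Fᵀ * E⁻¹ * F) + (X * Y⁻¹)ᵀ * (X * Y⁻¹)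
        = Y⁻¹ - Fᵀ * E⁻¹ * F := by abel
    rwa [heq3] at this
  have hMP : (E⁻¹ - Y⁻¹).PosSemidef := by
    apply inv_sub_inv_psd hE hYpos
    have : Y - E = δ ^ 2 • (B * Bᵀ) := by rw [hEdef]; abel
    rw [this]
    apply psd_smul _ (sq_nonneg δ)
    have := posSemidef_self_mul_conjTranspose B
    rwa [conjTranspose_eq_transpose_of_trivial] at this
  refine ⟨stmt1, stmt2, ?_⟩
  intro μ hμ
  exact lyapunov_schur hYpos.inv hE.inv.posSemidef hMP hQ' μ hμ
end

section
/- Fix δ > 0, a symmetric Y ≻ 0 and X ∈ ℝ^{1×n} with [[Y, Xᵀ],[X, 1]] ≻ 0 (equivalently Z := Y − XᵀX ≻ 0), and scalars α ≥ 0, β. Then the first (four-block) inequality of the data-driven LMI holds if and only if M(Y, X, δ) − αN − [[βI, 0],[0, 0]] ⪰ 0. -/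
open Matrix

lemma fromBlocks_sub' {l m o p : Type*} (A A' : Matrix l m ℝ) (B B' : Matrix l o ℝ)
    (C C' : Matrix p m ℝ) (D D' : Matrix p o ℝ) :
    fromBlocks A B C D - fromBlocks A' B' C' D' =
      fromBlocks (A - A') (B - B') (C - C') (D - D') := by
  rw [sub_eq_add_neg, Matrix.fromBlocks_neg, Matrix.fromBlocks_add]
  simp [sub_eq_add_neg]

/-- Schur-complement equivalence: the first (four-block) inequality of the data-driven
LMI holds iff `M(Y,X,δ) - α N - [[β I, 0],[0, 0]] ⪰ 0`. -/
theorem lmi_iff_S_procedure_certificate (n T : ℕ) (hn : 0 < n) (hT : 0 < T)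
    (B : Matrix (Fin n) (Fin 1) ℝ) (Xm Xp : Matrix (Fin n) (Fin T) ℝ)
    (U : Matrix (Fin 1) (Fin T) ℝ)
    (Φ₁₁ : Matrix (Fin n) (Fin n) ℝ) (Φ₁₂ : Matrix (Fin n) (Fin T) ℝ)
    (Φ₂₂ : Matrix (Fin T) (Fin T) ℝ)
    (hΦ₁₁ : Φ₁₁.IsSymm) (hΦ₂₂symm : Φ₂₂.IsSymm) (hΦ₂₂ : (-Φ₂₂).PosDef)
    (δ : ℝ) (hδ : 0 < δ)
    (Y : Matrix (Fin n) (Fin n) ℝ) (X : Matrix (Fin 1) (Fin n) ℝ)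
    (hY : Y.IsSymm) (hYpos : Y.PosDef)
    (hYX : (fromBlocks Y Xᵀ X (1 : Matrix (Fin 1) (Fin 1) ℝ)).PosDef)
    (α β : ℝ) (hα : 0 ≤ α) :
    (lmiMat B Xm Xp U (fromBlocks Φ₁₁ Φ₁₂ Φ₁₂ᵀ Φ₂₂) Y X δ α β).PosSemidef
      ↔ (Mmat B Y X δ - α • Nmat B Xm Xp U (fromBlocks Φ₁₁ Φ₁₂ Φ₁₂ᵀ Φ₂₂) -
          fromBlocks (β • (1 : Matrix (Fin n) (Fin n) ℝ)) 0 0 0).PosSemidef := by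

  classical
  set Φ : Matrix (Fin n ⊕ Fin T) (Fin n ⊕ Fin T) ℝ := fromBlocks Φ₁₁ Φ₁₂ Φ₁₂ᵀ Φ₂₂ with hΦ
  set Z : Matrix (Fin n) (Fin n) ℝ := Y - Xᵀ * X with hZdef
  set R : Matrix (Fin n ⊕ Fin 1) (Fin n ⊕ Fin 1) ℝ := fromBlocks Y Xᵀ X 1 with hRdef
  set Q : Matrix (Fin n ⊕ Fin n) (Fin n ⊕ Fin 1) ℝ := fromBlocks (B * X) 0 Y 0 with hQdef
  set F : Matrix (Fin n ⊕ Fin n) (Fin n ⊕ Fin 1) ℝ :=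
    fromBlocks (B * X * Z⁻¹) (-(B * X * Z⁻¹ * Xᵀ)) (Y * Z⁻¹) (-(Y * Z⁻¹ * Xᵀ)) with hFdef
  set N : Matrix (Fin n ⊕ Fin n) (Fin n ⊕ Fin n) ℝ := Nmat B Xm Xp U Φ with hNdef
  set M₀ : Matrix (Fin n ⊕ Fin n) (Fin n ⊕ Fin n) ℝ :=
    fromBlocks (Y - δ ^ 2 • (B * Bᵀ) - β • 1) 0 0 0 with hM₀def
  have hRdet : IsUnit R.det := isUnit_iff_ne_zero.mpr (ne_of_gt hYX.det_pos)
  have hZdet : IsUnit Z.det := by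
    have h := hYX.det_pos
    rw [hRdef, det_fromBlocks_one₂₂] at h
    exact isUnit_iff_ne_zero.mpr (ne_of_gt h)
  haveI : Invertible R := R.invertibleOfIsUnitDet hRdet
  have hZZ : Z⁻¹ * Z = 1 := nonsing_inv_mul Z hZdet
  have hrow : ∀ (C : Matrix (Fin n) (Fin n) ℝ),
      C * Z⁻¹ * Y + -(C * Z⁻¹ * Xᵀ) * X = C := by
    intro C
    rw [Matrix.neg_mul, ← sub_eq_add_neg, Matrix.mul_assoc (C * Z⁻¹) Xᵀ X, ← Matrix.mul_sub,
      ← hZdef, Matrix.mul_assoc, hZZ, Matrix.mul_one]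
  have hFR : F * R = Q := by
    rw [hFdef, hRdef, hQdef, fromBlocks_multiply, hrow (B * X), hrow Y]
    simp
  have hQRinv : Q * R⁻¹ = F := by
    rw [← hFR, Matrix.mul_assoc, mul_nonsing_inv R hRdet, Matrix.mul_one]
  have hQH : Qᴴ = fromBlocks (Xᵀ * Bᵀ) Y 0 0 := by
    rw [hQdef, fromBlocks_conjTranspose]
    simp only [conjTranspose_eq_transpose_of_trivial, transpose_mul, transpose_zero, hY.eq]
  have hFQH : F * Qᴴ = fromBlocks (B * X * Z⁻¹ * Xᵀ * Bᵀ) (B * X * Z⁻¹ * Y)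
      (Y * Z⁻¹ * Xᵀ * Bᵀ) (Y * Z⁻¹ * Y) := by
    rw [hQH, hFdef, fromBlocks_multiply]
    apply fromBlocks_inj.mpr
    refine ⟨?_, ?_, ?_, ?_⟩ <;> simp [Matrix.mul_assoc]
  have hlmi : lmiMat B Xm Xp U Φ Y X δ α β = fromBlocks (M₀ - α • N) Q Qᴴ R := by
    rw [lmiMat, hQH]
    rw [transpose_fromRows, Matrix.fromRows_mul, Matrix.zero_mul,
      Matrix.fromRows_mul_fromCols]
    simp only [transpose_zero, Matrix.mul_zero, Matrix.zero_mul]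
    rw [show (fromBlocks (1 : Matrix (Fin n) (Fin n) ℝ) (Xp - B * U) 0 (-Xm) * Φ * (fromBlocks (1 : Matrix (Fin n) (Fin n) ℝ) (Xp - B * U) 0 (-Xm))ᵀ
        : Matrix (Fin n ⊕ Fin n) (Fin n ⊕ Fin n) ℝ) = N from rfl]
    rw [fromBlocks_smul, fromBlocks_sub']
    simp [hM₀def, hQdef, hRdef]
  rw [hlmi, PosDef.fromBlocks₂₂ (M₀ - α • N) Q hYX]
  have hmat : M₀ - α • N - Q * R⁻¹ * Qᴴ =
      Mmat B Y X δ - α • N - fromBlocks (β • (1 : Matrix (Fin n) (Fin n) ℝ)) 0 0 0 := by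
    rw [hQRinv, hFQH, sub_right_comm, sub_right_comm (Mmat B Y X δ)]
    congr 1
    rw [Mmat, hM₀def, ← hZdef, fromBlocks_sub', fromBlocks_sub']
    apply fromBlocks_inj.mpr
    refine ⟨?_, ?_, ?_, ?_⟩ <;> abel
  rw [hmat]
end

section
/- For every k ∈ ℝ, the matrix A_k := [[0, k],[0, 0]] satisfies [I, A_k] N [I, A_k]ᵀ ⪰ 0 (i.e., A_k ∈ Σ), and every complex eigenvalue of A_k equals 0; hence Σ contains matrices with arbitrarily large entries whose eigenvalues are all bounded (indeed zero). -/
open Matrix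

/-- Example: with `B = U = X₊ = I₂`, `X₋ = [[1,1],[0,0]]`, `Φ₁₁ = I`, `Φ₁₂ = 0`,
`Φ₂₂ = -I`, every nilpotent matrix `A_k = [[0,k],[0,0]]` is consistent with the data
(`A_k ∈ Σ`) while all its complex eigenvalues are `0`. -/
theorem nilpotent_example (k : ℝ) :
    (fromCols (1 : Matrix (Fin 2) (Fin 2) ℝ) (!![0, k; 0, 0] : Matrix (Fin 2) (Fin 2) ℝ) *
        (fromBlocks 1 ((1 : Matrix (Fin 2) (Fin 2) ℝ) -
            (1 : Matrix (Fin 2) (Fin 2) ℝ) * (1 : Matrix (Fin 2) (Fin 2) ℝ))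
          0 (-(!![1, 1; 0, 0] : Matrix (Fin 2) (Fin 2) ℝ)) *
          fromBlocks (1 : Matrix (Fin 2) (Fin 2) ℝ) (0 : Matrix (Fin 2) (Fin 2) ℝ)
            (0 : Matrix (Fin 2) (Fin 2) ℝ)ᵀ (-(1 : Matrix (Fin 2) (Fin 2) ℝ)) *
          (fromBlocks 1 ((1 : Matrix (Fin 2) (Fin 2) ℝ) -
              (1 : Matrix (Fin 2) (Fin 2) ℝ) * (1 : Matrix (Fin 2) (Fin 2) ℝ))
            0 (-(!![1, 1; 0, 0] : Matrix (Fin 2) (Fin 2) ℝ)))ᵀ) *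
        (fromCols (1 : Matrix (Fin 2) (Fin 2) ℝ) (!![0, k; 0, 0] : Matrix (Fin 2) (Fin 2) ℝ))ᵀ).PosSemidef ∧
      ∀ μ ∈ spectrum ℂ ((!![0, k; 0, 0] : Matrix (Fin 2) (Fin 2) ℝ).map Complex.ofReal),
        μ = 0 := by
  constructor
  · have h : (fromCols (1 : Matrix (Fin 2) (Fin 2) ℝ) (!![0, k; 0, 0] : Matrix (Fin 2) (Fin 2) ℝ) *
        (fromBlocks 1 ((1 : Matrix (Fin 2) (Fin 2) ℝ) -
            (1 : Matrix (Fin 2) (Fin 2) ℝ) * (1 : Matrix (Fin 2) (Fin 2) ℝ))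
          0 (-(!![1, 1; 0, 0] : Matrix (Fin 2) (Fin 2) ℝ)) *
          fromBlocks (1 : Matrix (Fin 2) (Fin 2) ℝ) (0 : Matrix (Fin 2) (Fin 2) ℝ)
            (0 : Matrix (Fin 2) (Fin 2) ℝ)ᵀ (-(1 : Matrix (Fin 2) (Fin 2) ℝ)) *
          (fromBlocks 1 ((1 : Matrix (Fin 2) (Fin 2) ℝ) -
              (1 : Matrix (Fin 2) (Fin 2) ℝ) * (1 : Matrix (Fin 2) (Fin 2) ℝ))
            0 (-(!![1, 1; 0, 0] : Matrix (Fin 2) (Fin 2) ℝ)))ᵀ) *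
        (fromCols (1 : Matrix (Fin 2) (Fin 2) ℝ) (!![0, k; 0, 0] : Matrix (Fin 2) (Fin 2) ℝ))ᵀ) =
        (1 : Matrix (Fin 2) (Fin 2) ℝ) := by
      ext i j
      fin_cases i <;> fin_cases j <;>
        simp [Matrix.mul_apply, Fin.sum_univ_succ, fromCols, fromBlocks,
          Matrix.one_apply, Matrix.transpose_apply]
    rw [h]; exact Matrix.PosSemidef.one
  · intro μ hμ
    rw [spectrum.mem_iff] at hμ
    by_contra h
    apply hμ
    rw [Matrix.isUnit_iff_isUnit_det]
    have hd : ((algebraMap ℂ (Matrix (Fin 2) (Fin 2) ℂ)) μ -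
        (!![0, k; 0, 0] : Matrix (Fin 2) (Fin 2) ℝ).map Complex.ofReal).det = μ ^ 2 := by
      simp [Matrix.det_fin_two, Matrix.algebraMap_matrix_apply, Matrix.map_apply]
      ring
    rw [hd]
    exact (pow_ne_zero 2 h).isUnit
end
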